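/- In microCCS with choice, distributed bisimilarity coincides with structural congruence: P is distributedly bisimilar to Q if and only if P ≡ Q, where ≡ additionally includes the abelian-monoid laws for + and the idempotence law S+S ≡ S. -/

import Mathlib

/-- CCS visible actions: a name `a` or a coname `ā`. -/
inductive Act where
  | inp : ℕ → Act
  | out : ℕ → Act
deriving DecidableEq

/-- The coaction. -/
def Act.co : Act → Act
  | .inp a => .out a
  | .out a => .inp a

/-- Transition labels. -/
inductive Lab where
  | act : Act → Lab
  | tau : Lab
deriving DecidableEq

mutual
/-- Guarded sums of microCCS with choice: S ::= 0 | η.P | S + S. -/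
inductive SP where
  | nil : SP
  | pre : Act → PP → SP
  | sum : SP → SP → SP
/-- Processes of microCCS with choice: P ::= S | P ‖ P. -/
inductive PP where
  | ofS : SP → PP
  | par : PP → PP → PP
end

/-- Transitions of sum terms. -/
inductive SStep : SP → Act → PP → Prop where
  | pre (η P) : SStep (.pre η P) η P
  | sumL : SStep S η P → SStep (.sum S S') η P
  | sumR : SStep S' η P → SStep (.sum S S') η P

/-- The standard CCS transition system on microCCS with choice. -/
inductive PStep : PP → Lab → PP → Prop where
  | ofS {S : SP} {η : Act} {P : PP} : SStep S η P → PStep (.ofS S) (.act η) P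
  | syn {P P' Q Q' : PP} {η : Act} :
      PStep P (.act η) P' → PStep Q (.act η.co) Q' →
      PStep (.par P Q) .tau (.par P' Q')
  | parL (Q) : PStep P μ P' → PStep (.par P Q) μ (.par P' Q)
  | parR (P) : PStep Q μ Q' → PStep (.par P Q) μ (.par P Q')

/-- A (symmetric) strong bisimulation on microCCS with choice. -/
def IsPBisim (R : PP → PP → Prop) : Prop :=
  (∀ P Q, R P Q → R Q P) ∧
  ∀ P Q μ P', R P Q → PStep P μ P' → ∃ Q', PStep Q μ Q' ∧ R P' Q'

/-- Strong bisimilarity on microCCS with choice. -/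
def PBisim (P Q : PP) : Prop := ∃ R, IsPBisim R ∧ R P Q

/-- Distributed transitions `P --μ-->_d ⟨P₁, P₂⟩`, with local residual `P₁`
    and concurrent residual `P₂`. -/
inductive DStep : PP → Lab → PP → PP → Prop where
  | ofS {S : SP} {η : Act} {P : PP} :
      SStep S η P → DStep (.ofS S) (.act η) P (.ofS .nil)
  | parL {P P₁ P₂ : PP} {μ : Lab} (P' : PP) :
      DStep P μ P₁ P₂ → DStep (.par P P') μ P₁ (.par P₂ P')
  | parR {P' P₁ P₂ : PP} {μ : Lab} (P : PP) :
      DStep P' μ P₁ P₂ → DStep (.par P P') μ P₁ (.par P P₂)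
  | syn {P Q P₁ P₂ Q₁ Q₂ : PP} {η : Act} :
      DStep P (.act η) P₁ P₂ → DStep Q (.act η.co) Q₁ Q₂ →
      DStep (.par P Q) .tau (.par P₁ Q₁) (.par P₂ Q₂)

/-- A (symmetric) distributed bisimulation. -/
def IsDBisim (R : PP → PP → Prop) : Prop :=
  (∀ P Q, R P Q → R Q P) ∧
  ∀ P Q μ P₁ P₂, R P Q → DStep P μ P₁ P₂ →
    ∃ Q₁ Q₂, DStep Q μ Q₁ Q₂ ∧ R P₁ Q₁ ∧ R P₂ Q₂

/-- Distributed bisimilarity. -/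
def DBisim (P Q : PP) : Prop := ∃ R, IsDBisim R ∧ R P Q

mutual
/-- Structural congruence on sums: abelian monoid laws and idempotence
    for `+`, plus congruence rules. -/
inductive SSC : SP → SP → Prop where
  | refl (S) : SSC S S
  | symm : SSC S T → SSC T S
  | trans : SSC S T → SSC T U → SSC S U
  | comm (S T) : SSC (.sum S T) (.sum T S)
  | assoc (S T U) : SSC (.sum S (.sum T U)) (.sum (.sum S T) U)
  | unit (S) : SSC (.sum S .nil) S
  | idem (S) : SSC (.sum S S) S
  | pre (η) : PSC P Q → SSC (.pre η P) (.pre η Q)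
  | sum : SSC S S' → SSC T T' → SSC (.sum S T) (.sum S' T')
/-- Structural congruence on processes: abelian monoid laws for `‖`,
    plus congruence rules. -/
inductive PSC : PP → PP → Prop where
  | refl (P) : PSC P P
  | symm : PSC P Q → PSC Q P
  | trans : PSC P Q → PSC Q R → PSC P R
  | comm (P Q) : PSC (.par P Q) (.par Q P)
  | assoc (P Q R) : PSC (.par P (.par Q R)) (.par (.par P Q) R)
  | unit (P) : PSC (.par P (.ofS .nil)) P
  | ofS : SSC S T → PSC (.ofS S) (.ofS T)
  | par : PSC P P' → PSC Q Q' → PSC (.par P Q) (.par P' Q')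
end

/-!
Structural congruence is a distributed bisimulation: each of its laws is matched transition by
transition, and distributed transitions are compositional.

Conversely, thanks to idempotence a sum is determined up to `≡` by its set of summands `(η, [A])`,
and a process by the multiset of classes of its parallel components that are not `≡ 0`. A visible
distributed transition fires a summand of one component; its local residual is the continuation and
its concurrent residual consists of the remaining components. So if `P` and `Q` are distributedly
bisimilar, by induction on size every summand of a component `c` of `P` is matched by a summand of
a component `d` of `Q` whose removal leaves the same multiset. Erasing different elements of a
multiset gives different results, so `d` does not depend on the summand; hence `c` and `d` have
the same summands, `c = d`, and the two multisets agree.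
-/

theorem Act.co_co (η : Act) : η.co.co = η := by cases η <;> rfl

theorem Multiset.eq_of_erase_eq_erase {α : Type*} [DecidableEq α] {s : Multiset α} {a b : α}
    (ha : a ∈ s) (hb : b ∈ s) (h : s.erase a = s.erase b) : a = b := by
  rw [← Multiset.cons_inj_left (s.erase a), Multiset.cons_erase ha, h, Multiset.cons_erase hb]

theorem Multiset.eq_of_forall_exists_erase_eq {α β : Type*} [DecidableEq α] {f : α → Set β}
    (hf : Function.Injective f) {M N : Multiset α}
    (hM : ∀ a ∈ M, (f a).Nonempty) (hN : ∀ b ∈ N, (f b).Nonempty)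
    (hMN : ∀ a ∈ M, ∀ x ∈ f a, ∃ b ∈ N, x ∈ f b ∧ M.erase a = N.erase b)
    (hNM : ∀ b ∈ N, ∀ x ∈ f b, ∃ a ∈ M, x ∈ f a ∧ N.erase b = M.erase a) : M = N := by
  rcases M.empty_or_exists_mem with rfl | ⟨a, ha⟩
  · refine (Multiset.eq_zero_of_forall_notMem fun b hb => ?_).symm
    obtain ⟨x, hx⟩ := hN b hb
    obtain ⟨a, ha, -⟩ := hNM b hb x hx
    exact Multiset.notMem_zero a ha
  obtain ⟨x, hx⟩ := hM a ha
  obtain ⟨b, hb, -, hab⟩ := hMN a ha x hx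
  have hfab : f a = f b := by
    ext y
    constructor
    · intro hy
      obtain ⟨b', hb', hy', hab'⟩ := hMN a ha y hy
      rwa [Multiset.eq_of_erase_eq_erase hb hb' (hab.symm.trans hab')]
    · intro hy
      obtain ⟨a', ha', hy', hba'⟩ := hNM b hb y hy
      rwa [Multiset.eq_of_erase_eq_erase ha ha' (hab.trans hba')]
  rw [← Multiset.cons_erase ha, ← Multiset.cons_erase hb, hab, hf hfab]

instance SP.setoid : Setoid SP := ⟨SSC, ⟨SSC.refl, SSC.symm, SSC.trans⟩⟩

instance PP.setoid : Setoid PP := ⟨PSC, ⟨PSC.refl, PSC.symm, PSC.trans⟩⟩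

theorem SP.mk_eq_mk {S T : SP} : (⟦S⟧ : Quotient SP.setoid) = ⟦T⟧ ↔ SSC S T := Quotient.eq

theorem PP.mk_eq_mk {P Q : PP} : (⟦P⟧ : Quotient PP.setoid) = ⟦Q⟧ ↔ PSC P Q := Quotient.eq

namespace SP

def summands (S : SP) : Set (Act × Quotient PP.setoid) := {x | ∃ A, SStep S x.1 A ∧ ⟦A⟧ = x.2}

@[simp] theorem summands_nil : nil.summands = ∅ := by
  ext ⟨η, a⟩; simp only [summands, Set.mem_ofPred_eq, Set.mem_empty_iff_false, iff_false]
  rintro ⟨A, h, -⟩; cases h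

@[simp] theorem summands_pre (η : Act) (P : PP) : (pre η P).summands = {(η, ⟦P⟧)} := by
  ext ⟨η', a⟩; simp only [summands, Set.mem_ofPred_eq, Set.mem_singleton_iff, Prod.mk.injEq]
  constructor
  · rintro ⟨A, h, rfl⟩; cases h; exact ⟨rfl, rfl⟩
  · rintro ⟨rfl, rfl⟩; exact ⟨P, .pre _ P, rfl⟩

@[simp] theorem summands_sum (S T : SP) : (sum S T).summands = S.summands ∪ T.summands := by
  ext ⟨η, a⟩; simp only [summands, Set.mem_ofPred_eq, Set.mem_union]
  constructor
  · rintro ⟨A, h | h, rfl⟩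
    exacts [.inl ⟨A, ‹_›, rfl⟩, .inr ⟨A, ‹_›, rfl⟩]
  · rintro (⟨A, h, rfl⟩ | ⟨A, h, rfl⟩)
    exacts [⟨A, .sumL h, rfl⟩, ⟨A, .sumR h, rfl⟩]

theorem summands_eq_of_ssc {S T : SP} : SSC S T → S.summands = T.summands
  | .refl _ => rfl
  | .symm h => (summands_eq_of_ssc h).symm
  | .trans h₁ h₂ => (summands_eq_of_ssc h₁).trans (summands_eq_of_ssc h₂)
  | .comm _ _ => by simp [Set.union_comm]
  | .assoc _ _ _ => by simp [Set.union_assoc]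
  | .unit _ => by simp
  | .idem _ => by simp
  | .pre _ h => by simp [PP.mk_eq_mk.2 h]
  | .sum h₁ h₂ => by simp [summands_eq_of_ssc h₁, summands_eq_of_ssc h₂]

theorem ssc_sum_pre_of_sstep {T : SP} {η : Act} {B : PP} (h : SStep T η B) :
    SSC (sum T (pre η B)) T := by
  induction h with
  | pre η P => exact .idem _
  | sumL _ ih =>
    exact (SSC.assoc _ _ _).symm.trans <| (SSC.sum (.refl _) (.comm _ _)).trans <|
      (SSC.assoc _ _ _).trans (.sum ih (.refl _))
  | sumR _ ih => exact (SSC.assoc _ _ _).symm.trans (.sum (.refl _) ih)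

theorem ssc_sum_of_summands_subset {T : SP} :
    ∀ {U : SP}, U.summands ⊆ T.summands → SSC (sum T U) T
  | nil, _ => .unit _
  | pre η A, h => by
    obtain ⟨B, hB, hBA⟩ := h (by simp : (η, ⟦A⟧) ∈ (pre η A).summands)
    exact (SSC.sum (.refl _) (.pre η (PP.mk_eq_mk.1 hBA).symm)).trans (ssc_sum_pre_of_sstep hB)
  | sum U₁ U₂, h => by
    rw [summands_sum, Set.union_subset_iff] at h
    exact (SSC.assoc _ _ _).trans <| (SSC.sum (ssc_sum_of_summands_subset h.1) (.refl _)).trans <|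
      ssc_sum_of_summands_subset h.2

theorem ssc_iff_summands_eq {S T : SP} : SSC S T ↔ S.summands = T.summands :=
  ⟨summands_eq_of_ssc, fun h =>
    (ssc_sum_of_summands_subset h.symm.subset).symm.trans <|
      (SSC.comm _ _).trans (ssc_sum_of_summands_subset h.subset)⟩

def classSummands : Quotient SP.setoid → Set (Act × Quotient PP.setoid) :=
  Quotient.lift summands fun _ _ => summands_eq_of_ssc

theorem classSummands_injective : Function.Injective classSummands := by
  rintro ⟨S⟩ ⟨T⟩ h
  exact Quotient.sound (ssc_iff_summands_eq.2 h)

end SP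

def SCTransfer (P Q : PP) : Prop :=
  ∀ μ P₁ P₂, DStep P μ P₁ P₂ → ∃ Q₁ Q₂, DStep Q μ Q₁ Q₂ ∧ PSC P₁ Q₁ ∧ PSC P₂ Q₂

namespace SCTransfer

open PP

theorem refl (P : PP) : SCTransfer P P :=
  fun _ _ _ h => ⟨_, _, h, .refl _, .refl _⟩

theorem trans {P Q R : PP} (hPQ : SCTransfer P Q) (hQR : SCTransfer Q R) : SCTransfer P R := by
  intro μ P₁ P₂ hP
  obtain ⟨Q₁, Q₂, hQ, hPQ₁, hPQ₂⟩ := hPQ μ P₁ P₂ hP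
  obtain ⟨R₁, R₂, hR, hQR₁, hQR₂⟩ := hQR μ Q₁ Q₂ hQ
  exact ⟨R₁, R₂, hR, hPQ₁.trans hQR₁, hPQ₂.trans hQR₂⟩

theorem par_comm (P Q : PP) : SCTransfer (par P Q) (par Q P) := by
  intro μ P₁ P₂ h
  cases h with
  | parL _ h => exact ⟨_, _, .parR Q h, .refl _, .comm _ _⟩
  | parR _ h => exact ⟨_, _, .parL P h, .refl _, .comm _ _⟩
  | @syn _ _ _ _ _ _ η hP hQ =>
    exact ⟨_, _, .syn hQ ((Act.co_co η).symm ▸ hP), .comm _ _, .comm _ _⟩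

theorem par_assoc (P Q R : PP) : SCTransfer (par P (par Q R)) (par (par P Q) R) := by
  intro μ P₁ P₂ h
  rcases h with _ | ⟨_, hP⟩ | ⟨_, h⟩ | ⟨hP, h⟩
  · exact ⟨_, _, .parL R (.parL Q hP), .refl _, .assoc _ _ _⟩
  · rcases h with _ | ⟨_, hQ⟩ | ⟨_, hR⟩ | ⟨hQ, hR⟩
    · exact ⟨_, _, .parL R (.parR P hQ), .refl _, .assoc _ _ _⟩
    · exact ⟨_, _, .parR _ hR, .refl _, .assoc _ _ _⟩
    · exact ⟨_, _, .syn (.parR P hQ) hR, .refl _, .assoc _ _ _⟩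
  · rcases h with _ | ⟨_, hQ⟩ | ⟨_, hR⟩
    · exact ⟨_, _, .parL R (.syn hP hQ), .refl _, .assoc _ _ _⟩
    · exact ⟨_, _, .syn (.parL Q hP) hR, .refl _, .assoc _ _ _⟩

theorem par_assoc_symm (P Q R : PP) : SCTransfer (par (par P Q) R) (par P (par Q R)) := by
  intro μ P₁ P₂ h
  rcases h with _ | ⟨_, h⟩ | ⟨_, hR⟩ | ⟨h, hR⟩
  · rcases h with _ | ⟨_, hP⟩ | ⟨_, hQ⟩ | ⟨hP, hQ⟩
    · exact ⟨_, _, .parL _ hP, .refl _, (PSC.assoc _ _ _).symm⟩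
    · exact ⟨_, _, .parR P (.parL R hQ), .refl _, (PSC.assoc _ _ _).symm⟩
    · exact ⟨_, _, .syn hP (.parL R hQ), .refl _, (PSC.assoc _ _ _).symm⟩
  · exact ⟨_, _, .parR P (.parR Q hR), .refl _, (PSC.assoc _ _ _).symm⟩
  · rcases h with _ | ⟨_, hP⟩ | ⟨_, hQ⟩
    · exact ⟨_, _, .syn hP (.parR Q hR), .refl _, (PSC.assoc _ _ _).symm⟩
    · exact ⟨_, _, .parR P (.syn hQ hR), .refl _, (PSC.assoc _ _ _).symm⟩

theorem par_nil (P : PP) : SCTransfer (par P (ofS .nil)) P := by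
  intro μ P₁ P₂ h
  rcases h with _ | ⟨_, hP⟩ | ⟨_, ⟨⟨⟩⟩⟩ | ⟨_, ⟨⟨⟩⟩⟩
  exact ⟨_, _, hP, .refl _, .unit _⟩

theorem to_par_nil (P : PP) : SCTransfer P (par P (ofS .nil)) :=
  fun _ _ _ h => ⟨_, _, .parL _ h, .refl _, (PSC.unit _).symm⟩

theorem ofS {S T : SP} (h : SSC S T) : SCTransfer (ofS S) (ofS T) := by
  intro μ A P₂ hS
  rcases hS with ⟨hSA⟩
  have hA : (_, ⟦A⟧) ∈ S.summands := ⟨A, hSA, rfl⟩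
  obtain ⟨B, hTB, hBA⟩ := SP.summands_eq_of_ssc h ▸ hA
  exact ⟨B, _, .ofS hTB, (PP.mk_eq_mk.1 hBA).symm, .refl _⟩

theorem par {P P' Q Q' : PP} (hP : PSC P P') (hQ : PSC Q Q')
    (tP : SCTransfer P P') (tQ : SCTransfer Q Q') : SCTransfer (par P Q) (par P' Q') := by
  intro μ R₁ R₂ h
  rcases h with _ | ⟨_, h⟩ | ⟨_, h⟩ | ⟨h₁, h₂⟩
  · obtain ⟨P₁, P₂, h', h₁, h₂⟩ := tP _ _ _ h
    exact ⟨P₁, _, .parL Q' h', h₁, .par h₂ hQ⟩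
  · obtain ⟨Q₁, Q₂, h', h₁, h₂⟩ := tQ _ _ _ h
    exact ⟨Q₁, _, .parR P' h', h₁, .par hP h₂⟩
  · obtain ⟨P₁, P₂, h₁', hP₁, hP₂⟩ := tP _ _ _ h₁
    obtain ⟨Q₁, Q₂, h₂', hQ₁, hQ₂⟩ := tQ _ _ _ h₂
    exact ⟨_, _, .syn h₁' h₂', .par hP₁ hQ₁, .par hP₂ hQ₂⟩

end SCTransfer

theorem PSC.scTransfer {P Q : PP} : PSC P Q → SCTransfer P Q ∧ SCTransfer Q P
  | .refl P => ⟨.refl P, .refl P⟩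
  | .symm h => (PSC.scTransfer h).symm
  | .trans h₁ h₂ =>
    ⟨(scTransfer h₁).1.trans (scTransfer h₂).1, (scTransfer h₂).2.trans (scTransfer h₁).2⟩
  | .comm P Q => ⟨.par_comm P Q, .par_comm Q P⟩
  | .assoc P Q R => ⟨.par_assoc P Q R, .par_assoc_symm P Q R⟩
  | .unit P => ⟨.par_nil P, .to_par_nil P⟩
  | .ofS h => ⟨.ofS h, .ofS (SSC.symm h)⟩
  | .par hP hQ =>
    ⟨.par hP hQ (scTransfer hP).1 (scTransfer hQ).1,
      .par hP.symm hQ.symm (scTransfer hP).2 (scTransfer hQ).2⟩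

theorem psc_isDBisim : IsDBisim PSC :=
  ⟨fun _ _ h => h.symm, fun _ _ _ _ _ h => (PSC.scTransfer h).1 _ _ _⟩

namespace PP

open Classical in
noncomputable def components : PP → Multiset (Quotient SP.setoid)
  | ofS S => if S.summands.Nonempty then {⟦S⟧} else 0
  | par P Q => P.components + Q.components

/-- `Splits P S P'`: `S` is one of the parallel components of `P`, and `P'` is `P` with that
component replaced by `0`. -/
inductive Splits : PP → SP → PP → Prop
  | ofS (S : SP) : Splits (ofS S) S (ofS .nil)
  | parL {P P' : PP} {S : SP} (Q : PP) : Splits P S P' → Splits (par P Q) S (par P' Q)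
  | parR {Q Q' : PP} {S : SP} (P : PP) : Splits Q S Q' → Splits (par P Q) S (par P Q')

namespace Splits

variable {P P' : PP} {S : SP}

theorem psc (h : Splits P S P') : PSC P (par (PP.ofS S) P') := by
  induction h with
  | ofS S => exact (PSC.unit _).symm
  | parL Q _ ih => exact (PSC.par ih (.refl Q)).trans (PSC.assoc _ _ _).symm
  | parR P _ ih =>
    exact (PSC.par (.refl P) ih).trans <| (PSC.assoc _ _ _).trans <|
      (PSC.par (.comm _ _) (.refl _)).trans (PSC.assoc _ _ _).symm

theorem dstep {η : Act} {A : PP} (h : Splits P S P') (hS : SStep S η A) :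
    DStep P (.act η) A P' := by
  induction h with
  | ofS S => exact .ofS hS
  | parL Q _ ih => exact .parL Q (ih hS)
  | parR P _ ih => exact .parR P (ih hS)

theorem components_eq (h : Splits P S P') (hS : S.summands.Nonempty) :
    P.components = ⟦S⟧ ::ₘ P'.components := by
  induction h with
  | ofS S => simp [components, hS]
  | parL Q _ ih => simp [components, ih hS]
  | parR P _ ih => simp [components, ih hS, Multiset.add_cons]

end Splits

theorem exists_splits_of_mem_components {c : Quotient SP.setoid} :
    ∀ {P : PP}, c ∈ P.components → ∃ S P', ⟦S⟧ = c ∧ S.summands.Nonempty ∧ Splits P S P'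
  | ofS S, hc => by
    by_cases hS : S.summands.Nonempty
    · simp only [components, hS, if_true, Multiset.mem_singleton] at hc
      exact ⟨S, _, hc.symm, hS, .ofS S⟩
    · simp [components, hS] at hc
  | par P Q, hc => by
    rcases Multiset.mem_add.1 hc with hc | hc
    · obtain ⟨S, P', hSc, hS, h⟩ := exists_splits_of_mem_components hc
      exact ⟨S, _, hSc, hS, .parL Q h⟩
    · obtain ⟨S, Q', hSc, hS, h⟩ := exists_splits_of_mem_components hc
      exact ⟨S, _, hSc, hS, .parR P h⟩

theorem psc_nil_of_components_eq_zero : ∀ {P : PP}, P.components = 0 → PSC P (ofS .nil)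
  | ofS S, h => by
    by_cases hS : S.summands.Nonempty
    · simp [components, hS] at h
    · refine .ofS (SP.ssc_iff_summands_eq.2 ?_)
      simpa [Set.not_nonempty_iff_eq_empty] using hS
  | par P Q, h => by
    rw [components, add_eq_zero] at h
    exact (PSC.par (psc_nil_of_components_eq_zero h.1) (psc_nil_of_components_eq_zero h.2)).trans
      (.unit _)

theorem psc_of_components_eq {P Q : PP} (h : P.components = Q.components) : PSC P Q := by
  suffices ∀ M : Multiset (Quotient SP.setoid), ∀ P Q : PP,
      P.components = M → Q.components = M → PSC P Q from this _ P Q h rfl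
  intro M
  induction M using Multiset.induction_on with
  | empty =>
    exact fun P Q hP hQ =>
      (psc_nil_of_components_eq_zero hP).trans (psc_nil_of_components_eq_zero hQ).symm
  | cons c M ih =>
    intro P Q hP hQ
    obtain ⟨S, P', rfl, hS, hPS⟩ :=
      exists_splits_of_mem_components (hP ▸ Multiset.mem_cons_self _ _)
    obtain ⟨T, Q', hTS, hT, hQT⟩ :=
      exists_splits_of_mem_components (hQ ▸ Multiset.mem_cons_self _ _)
    rw [hPS.components_eq hS, Multiset.cons_inj_right] at hP
    rw [hQT.components_eq hT, hTS, Multiset.cons_inj_right] at hQ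
    exact hPS.psc.trans <|
      (PSC.par (.ofS (SP.mk_eq_mk.1 hTS).symm) (ih P' Q' hP hQ)).trans hQT.psc.symm

end PP

theorem SStep.sizeOf_lt {S : SP} {η : Act} {A : PP} (h : SStep S η A) : sizeOf A < sizeOf S := by
  induction h with
  | pre η P => simp
  | sumL _ ih | sumR _ ih => simp; omega

theorem DStep.sizeOf_lt {P P₁ P₂ : PP} {μ : Lab} (h : DStep P μ P₁ P₂) :
    sizeOf P₁ < sizeOf P ∧ sizeOf P₂ < sizeOf P := by
  induction h with
  | @ofS _ _ A hS => have := hS.sizeOf_lt; cases A <;> constructor <;> simp at * <;> omega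
  | parL _ _ ih | parR _ _ ih => constructor <;> simp <;> omega
  | syn _ _ ih₁ ih₂ => constructor <;> simp <;> omega

theorem DStep.exists_splits {P A P' : PP} {η : Act} (h : DStep P (.act η) A P') :
    ∃ S, SStep S η A ∧ PP.Splits P S P' := by
  generalize hμ : Lab.act η = μ at h
  induction h with
  | ofS hS => cases hμ; exact ⟨_, hS, .ofS _⟩
  | parL Q _ ih => obtain ⟨S, hS, h⟩ := ih hμ; exact ⟨S, hS, .parL Q h⟩
  | parR P _ ih => obtain ⟨S, hS, h⟩ := ih hμ; exact ⟨S, hS, .parR P h⟩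
  | syn => cases hμ

theorem DBisim.symm {P Q : PP} (h : DBisim P Q) : DBisim Q P :=
  let ⟨R, hR, hPQ⟩ := h; ⟨R, hR, hR.1 _ _ hPQ⟩

theorem DBisim.exists_dstep {P Q P₁ P₂ : PP} {μ : Lab} (h : DBisim P Q) (hP : DStep P μ P₁ P₂) :
    ∃ Q₁ Q₂, DStep Q μ Q₁ Q₂ ∧ DBisim P₁ Q₁ ∧ DBisim P₂ Q₂ :=
  let ⟨R, hR, hPQ⟩ := h
  let ⟨Q₁, Q₂, hQ, h₁, h₂⟩ := hR.2 _ _ _ _ _ hPQ hP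
  ⟨Q₁, Q₂, hQ, ⟨R, hR, h₁⟩, ⟨R, hR, h₂⟩⟩

namespace PP

theorem classSummands_nonempty_of_mem_components {P : PP} {c : Quotient SP.setoid}
    (hc : c ∈ P.components) :
    (SP.classSummands c).Nonempty := by
  obtain ⟨S, -, rfl, hS, -⟩ := exists_splits_of_mem_components hc
  exact hS

open Classical in
theorem exists_erase_eq_of_dbisim {P Q : PP}
    (ih : ∀ P' Q', sizeOf P' < sizeOf P → sizeOf Q' < sizeOf Q → DBisim P' Q' →
      P'.components = Q'.components)
    (h : DBisim P Q) {c : Quotient SP.setoid} (hc : c ∈ P.components)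
    {η : Act} {a : Quotient PP.setoid} (hx : (η, a) ∈ SP.classSummands c) :
    ∃ d ∈ Q.components, (η, a) ∈ SP.classSummands d ∧
      P.components.erase c = Q.components.erase d := by
  obtain ⟨S, P', rfl, hS, hPS⟩ := exists_splits_of_mem_components hc
  obtain ⟨A, hSA, rfl⟩ := hx
  have hP := hPS.dstep hSA
  obtain ⟨Q₁, Q₂, hQ, hAQ₁, hP'Q₂⟩ := h.exists_dstep hP
  obtain ⟨T, hTQ₁, hQT⟩ := hQ.exists_splits
  have hT : T.summands.Nonempty := ⟨(η, ⟦Q₁⟧), Q₁, hTQ₁, rfl⟩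
  obtain ⟨hA, hP'⟩ := hP.sizeOf_lt
  obtain ⟨hQ₁, hQ₂⟩ := hQ.sizeOf_lt
  refine ⟨⟦T⟧, hQT.components_eq hT ▸ Multiset.mem_cons_self _ _, ⟨Q₁, hTQ₁, ?_⟩, ?_⟩
  · exact PP.mk_eq_mk.2 (psc_of_components_eq (ih _ _ hA hQ₁ hAQ₁)).symm
  · rw [hPS.components_eq hS, hQT.components_eq hT, Multiset.erase_cons_head,
      Multiset.erase_cons_head]
    exact ih _ _ hP' hQ₂ hP'Q₂

theorem components_eq_of_dbisim {P Q : PP} (h : DBisim P Q) : P.components = Q.components := by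
  classical
  exact Multiset.eq_of_forall_exists_erase_eq SP.classSummands_injective
    (fun _ => classSummands_nonempty_of_mem_components)
    (fun _ => classSummands_nonempty_of_mem_components)
    (fun _ hc _ hx =>
      exists_erase_eq_of_dbisim (fun _ _ _ _ h' => components_eq_of_dbisim h') h hc hx)
    (fun _ hd _ hx =>
      exists_erase_eq_of_dbisim (fun _ _ _ _ h' => components_eq_of_dbisim h') h.symm hd hx)
termination_by sizeOf P + sizeOf Q
decreasing_by all_goals omega

end PP

/-- in microCCS with choice, distributed bisimilarity
    coincides with structural congruence (including idempotence of `+`). -/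
theorem dbisim_iff_sc (P Q : PP) : DBisim P Q ↔ PSC P Q :=
  ⟨fun h => PP.psc_of_components_eq (PP.components_eq_of_dbisim h),
    fun h => ⟨PSC, psc_isDBisim, h⟩⟩
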